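/- Let p be a prime, a ≥ 1, and let P̃ be a one-variable Laurent polynomial over ℤ/p^aℤ satisfying P̃(x)^p ≡ P̃(x^p) (mod p^a). Then for all n ∈ ℕ, all k ∈ {0,…,p−1}, and all Laurent polynomials Q over ℤ/p^aℤ, ct(P̃^{pn+k} Q) ≡ ct(P̃^n · Λ_p(P̃^k Q)) (mod p^a). -/

import Mathlib

open scoped Classical

/-- `Λ_p`: delete terms whose exponent is not divisible by `p` and substitute `x^p ↦ x`. -/
noncomputable def lam {R : Type*} [Semiring R] (p : ℕ) (hp : p ≠ 0) (Q : LaurentPolynomial R) :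
    LaurentPolynomial R :=
  AddMonoidAlgebra.ofCoeff (Finsupp.comapDomain (fun i : ℤ => (p : ℤ) * i) Q.coeff
    ((mul_right_injective₀ (Int.natCast_ne_zero.mpr hp)).injOn))

/-- `substPow p Q = Q(x^p)`. -/
noncomputable def substPow {R : Type*} [Semiring R] (p : ℕ) (Q : LaurentPolynomial R) :
    LaurentPolynomial R :=
  AddMonoidAlgebra.ofCoeff (Finsupp.mapDomain (fun i : ℤ => (p : ℤ) * i) Q.coeff)

/-- The largest absolute value of an exponent with nonzero coefficient (`0` for `Q = 0`). -/
noncomputable def ldeg {R : Type*} [Semiring R] (Q : LaurentPolynomial R) : ℕ :=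
  Q.coeff.support.sup fun i => i.natAbs

lemma lam_apply' {R : Type*} [Semiring R] (p : ℕ) (hp : p ≠ 0) (Q : LaurentPolynomial R) (i : ℤ) :
    (lam p hp Q).coeff i = Q.coeff ((p : ℤ) * i) := rfl

lemma key' {R : Type*} [CommSemiring R] (p : ℕ) (hp : p ≠ 0)
    (P S : LaurentPolynomial R) (i : ℤ) :
    (substPow p P * S).coeff ((p : ℤ) * i) = (P * lam p hp S).coeff i := by
  conv_rhs => rw [← P.sum_coeff_single]
  rw [substPow, Finsupp.mapDomain, AddMonoidAlgebra.ofCoeff_finsuppSum, Finsupp.sum_mul, Finsupp.sum_mul,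
    AddMonoidAlgebra.coeff_finsuppSum, AddMonoidAlgebra.coeff_finsuppSum, Finsupp.sum_apply, Finsupp.sum_apply]
  refine Finsupp.sum_congr fun m _ => ?_
  simp only [AddMonoidAlgebra.ofCoeff_single]
  rw [AddMonoidAlgebra.coeff_single_mul_apply, AddMonoidAlgebra.coeff_single_mul_apply, lam_apply']
  ring_nf

/-- if `P̃` over `ℤ/p^aℤ` satisfies `P̃(x)^p = P̃(x^p)`, then
`ct(P̃^{pn+k} Q) = ct(P̃^n · Λ_p(P̃^k Q))` in `ℤ/p^aℤ`. -/
theorem stmt17 (p : ℕ) (hp : p.Prime) (a : ℕ) (ha : 1 ≤ a)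
    (Pt : LaurentPolynomial (ZMod (p ^ a))) (hPt : Pt ^ p = substPow p Pt) :
    ∀ n : ℕ, ∀ k < p, ∀ Q : LaurentPolynomial (ZMod (p ^ a)),
      (Pt ^ (p * n + k) * Q).coeff 0 = (Pt ^ n * lam p hp.ne_zero (Pt ^ k * Q)).coeff 0 := by
  intro n k hk Q
  have hsub : substPow p (Pt ^ n) = Pt ^ (p * n) := by
    have : substPow p (Pt ^ n) = (substPow p Pt) ^ n := by
      simp only [substPow]
      exact map_pow (AddMonoidAlgebra.mapDomainRingHom (ZMod (p ^ a))
        (AddMonoidHom.mulLeft (p : ℤ))) Pt n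
    rw [this, ← hPt, ← pow_mul, mul_comm]
  have := key' p hp.ne_zero (Pt ^ n) (Pt ^ k * Q) 0
  rw [mul_zero, hsub, ← mul_assoc, ← pow_add] at this
  exact this
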